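/- arXiv:1701.07470 — 5 statements merged into one kernel-verified Lean document; each statement's English description precedes it below -/
import Mathlib

section
/- Let a ≠ b be letters and n ≥ 2. For words u ∈ aaa*, v ∈ a*b: there exists x ∈ a*baa with |v|_a < |u|_a, v ⋢ x, and u ⊑ x, if and only if u = aⁿ and v = aⁿ⁻¹b for some n ≥ 2. -/
/-! Write u = aⁿ, v = aᵐb and x = aˡbaa. Since b occurs in x only once, v ⊑ x iff m ≤ l, and
u ⊑ x iff n ≤ l + 2. The three conditions then read l < m < n ≤ l + 2, which forces m = n - 1
(and n = l + 2); conversely l = n - 2 is a witness. -/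

namespace List

variable {α : Type*} {a b : α}

theorem replicate_append_singleton_sublist_replicate_append_cons_iff (hab : a ≠ b)
    {w : List α} (hw : b ∉ w) {m l : ℕ} :
    (replicate m a ++ [b]).Sublist (replicate l a ++ b :: w) ↔ m ≤ l := by
  refine ⟨fun h => ?_, fun h =>
    ((replicate_sublist_replicate a).2 h).append (singleton_sublist.2 mem_cons_self)⟩
  induction l generalizing m with
  | zero =>
    obtain _ | m := m
    · rfl
    · rw [replicate_succ, cons_append, replicate_zero, nil_append] at h
      have hbw : b ∈ w := ((sublist_cons_iff.1 h).resolve_right (by simp [hab])).subset (by simp)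
      exact absurd hbw hw
  | succ l ih =>
    obtain _ | m := m
    · exact Nat.zero_le _
    · rw [replicate_succ, replicate_succ, cons_append, cons_append, cons_sublist_cons] at h
      exact Nat.succ_le_succ (ih h)

variable [DecidableEq α]

theorem count_replicate_append_singleton (hab : a ≠ b) (m : ℕ) :
    (replicate m a ++ [b]).count a = m := by
  simp [count_append, hab.symm]

end List

theorem step7_characterization {A : Type*} [DecidableEq A] (a b : A) (hab : a ≠ b)
    (u v : List A)
    (hu : ∃ n : ℕ, 2 ≤ n ∧ u = List.replicate n a)
    (hv : ∃ m : ℕ, v = List.replicate m a ++ [b]) :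
    (∃ x : List A, (∃ l : ℕ, x = List.replicate l a ++ [b, a, a]) ∧
        v.count a < u.count a ∧ ¬ v.Sublist x ∧ u.Sublist x) ↔
      ∃ n : ℕ, 2 ≤ n ∧ u = List.replicate n a ∧ v = List.replicate (n - 1) a ++ [b] := by
  obtain ⟨n, hn, rfl⟩ := hu
  obtain ⟨m, rfl⟩ := hv
  have hb : b ∉ [a, a] := by simp [hab.symm]
  have hcount (l : ℕ) : (List.replicate l a ++ [b, a, a]).count a = l + 2 := by
    simp [List.count_append, hab.symm]
  simp only [List.count_replicate_self, List.count_replicate_append_singleton hab]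
  constructor
  · rintro ⟨_, ⟨l, rfl⟩, hmn, hml, hnl⟩
    rw [List.replicate_append_singleton_sublist_replicate_append_cons_iff hab hb] at hml
    rw [List.replicate_sublist_iff, hcount] at hnl
    exact ⟨n, hn, rfl, by congr; omega⟩
  · rintro ⟨n', -, hn', hm'⟩
    obtain rfl := List.replicate_left_injective a hn'
    obtain rfl := List.replicate_left_injective a (List.append_cancel_right hm')
    refine ⟨_, ⟨n - 2, rfl⟩, by omega, ?_, ?_⟩
    · rw [List.replicate_append_singleton_sublist_replicate_append_cons_iff hab hb]
      omega
    · rw [List.replicate_sublist_iff, hcount]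
      omega
end

section
/- If u is a subsequence of v and p is the shortest prefix of v containing u as a subsequence, then for any word w, if u·w ⊑ v then p·w ⊑ v. -/
theorem shortest_prefix_embedding {A : Type*} (u v p : List A)
    (huv : u.Sublist v) (hp : p.IsPrefix v) (hup : u.Sublist p)
    (hmin : ∀ q : List A, q.IsPrefix v → u.Sublist q → p.length ≤ q.length) :
    ∀ w : List A, (u ++ w).Sublist v → (p ++ w).Sublist v := by
  intro w hw
  rw [List.append_sublist_iff] at hw
  obtain ⟨r₁, r₂, hv, hur₁, hwr₂⟩ := hw
  have hr₁ : r₁.IsPrefix v := ⟨r₂, hv.symm⟩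
  have hlen : p.length ≤ r₁.length := hmin r₁ hr₁ hur₁
  have hpr₁ : p.IsPrefix r₁ := List.prefix_of_prefix_length_le hp hr₁ hlen
  obtain ⟨t, ht⟩ := hpr₁
  have : v = p ++ (t ++ r₂) := by rw [hv, ← ht, List.append_assoc]
  rw [this, List.append_sublist_append_left]
  exact hwr₂.trans (List.sublist_append_right t r₂)
end

section
/- Prefix characterization via subwords and letter counts: for words u, v over a finite alphabet A, u is a prefix of v if and only if for every letter a ∈ A there exists m ∈ ℕ such that u·aᵐ ⊑ v and |u|_a + m = |v|_a. -/
theorem prefix_iff_subword_counts {A : Type*} [Fintype A] [DecidableEq A] (u v : List A) :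
    u.IsPrefix v ↔
      ∀ a : A, ∃ m : ℕ, (u ++ List.replicate m a).Sublist v ∧ u.count a + m = v.count a := by
  constructor
  · rintro ⟨w, rfl⟩ a
    refine ⟨w.count a, ?_, ?_⟩
    · exact (List.replicate_sublist_iff.mpr le_rfl).append_left u
    · simp [List.count_append]
  · induction v generalizing u with
    | nil =>
      intro h
      cases u with
      | nil => exact List.prefix_rfl
      | cons b u' =>
        obtain ⟨m, hs, _⟩ := h b
        simpa using hs.length_le
    | cons c v' ih =>
      intro h
      cases u with
      | nil => exact List.nil_prefix
      | cons b u' =>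
        by_cases hbc : b = c
        · subst hbc
          have hp : u' <+: v' := by
            apply ih
            intro a
            obtain ⟨m, hs, hc⟩ := h a
            rw [List.cons_append] at hs
            refine ⟨m, List.cons_sublist_cons.mp hs, ?_⟩
            by_cases hab : a = b <;> simp [hab, List.count_cons] at hc ⊢ <;> omega
          exact List.cons_prefix_cons.mpr ⟨rfl, hp⟩
        · exfalso
          obtain ⟨m, hs, hc⟩ := h c
          have hs' : ((b :: u') ++ List.replicate m c).Sublist v' := by
            rcases List.sublist_cons_iff.mp hs with h1 | ⟨r, hr, hrs⟩
            · exact h1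
            · rw [List.cons_append] at hr
              exact absurd (List.cons.inj hr).1 hbc
          have hcount := hs'.count_le c
          simp [List.count_append, List.count_cons, hbc] at hc hcount
          omega
end

section
/- A subset S of ℕ^V, where V is partitioned as P = {V₁,…,V_n}, is a P-compatible semilinear set if and only if S is a finite union of sets of the form A₁ × ⋯ × A_n where each A_j ⊆ ℕ^{V_j} is semilinear. -/
set_option linter.unusedSectionVars false

/-- The linear set with base `b` and period vectors `ps`, as a subset of `ι → ℕ`. -/
def LinSet {ι : Type*} (b : ι → ℕ) (ps : List (ι → ℕ)) : Set (ι → ℕ) :=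
  {x | ∃ c : Fin ps.length → ℕ, x = fun v => b v + ∑ i, c i * ps.get i v}

/-- A set is semilinear if it is a finite union of linear sets. -/
def IsSemilinear {ι : Type*} (S : Set (ι → ℕ)) : Prop :=
  ∃ (k : ℕ) (b : Fin k → ι → ℕ) (ps : Fin k → List (ι → ℕ)),
    S = ⋃ j, LinSet (b j) (ps j)

/-- A set is `π`-compatible semilinear (where `π : V → Fin n` describes the partition
`P = {V₁,…,V_n}` of `V`) if it has a semilinear representation in which every period
vector is supported on a single part. -/
def IsCompatibleSemilinear {V : Type*} {n : ℕ} (π : V → Fin n) (S : Set (V → ℕ)) : Prop :=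
  ∃ (k : ℕ) (b : Fin k → V → ℕ) (ps : Fin k → List (V → ℕ)),
    (∀ j : Fin k, ∀ p ∈ ps j, ∃ i : Fin n, ∀ v : V, p v ≠ 0 → π v = i) ∧
    S = ⋃ j, LinSet (b j) (ps j)

def FLin {ι : Type*} (b : ι → ℕ) (P : Finset (ι → ℕ)) : Set (ι → ℕ) :=
  {x | ∃ f : (ι → ℕ) → ℕ, x = b + ∑ p ∈ P, f p • p}

section sums
variable {M : Type*} [AddCommMonoid M] [DecidableEq M]

lemma listsum_to_finsetsum (L : List M) (c : Fin L.length → ℕ) :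
    ∃ f : M → ℕ, ∑ i, c i • L.get i = ∑ p ∈ L.toFinset, f p • p := by
  refine ⟨fun p => ∑ i, if L.get i = p then c i else 0, ?_⟩
  rw [eq_comm]
  calc ∑ p ∈ L.toFinset, (∑ i, if L.get i = p then c i else 0) • p
      = ∑ p ∈ L.toFinset, ∑ i, (if L.get i = p then c i • p else 0) := by
        refine Finset.sum_congr rfl fun p _ => ?_
        rw [Finset.sum_smul]
        exact Finset.sum_congr rfl fun i _ => by split <;> simp
    _ = ∑ i, ∑ p ∈ L.toFinset, (if L.get i = p then c i • p else 0) := Finset.sum_comm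
    _ = ∑ i, c i • L.get i := by
        refine Finset.sum_congr rfl fun i _ => ?_
        rw [Finset.sum_ite_eq]
        simp [List.get_mem]

lemma finsetsum_to_listsum (L : List M) (f : M → ℕ) :
    ∃ c : Fin L.length → ℕ, ∑ p ∈ L.toFinset, f p • p = ∑ i, c i • L.get i := by
  induction L with
  | nil => exact ⟨fun i => 0, by simp⟩
  | cons p T ih =>
    obtain ⟨c', hc'⟩ := ih
    by_cases hp : p ∈ T.toFinset
    · refine ⟨Fin.cons 0 c', ?_⟩
      rw [List.toFinset_cons, Finset.insert_eq_self.2 hp, hc']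
      show _ = ∑ i : Fin (T.length + 1), (Fin.cons 0 c' : Fin (T.length + 1) → ℕ) i • (p :: T).get i
      rw [Fin.sum_univ_succ]
      simp
    · refine ⟨Fin.cons (f p) c', ?_⟩
      rw [List.toFinset_cons, Finset.sum_insert hp, hc']
      show _ = ∑ i : Fin (T.length + 1), (Fin.cons (f p) c' : Fin (T.length + 1) → ℕ) i • (p :: T).get i
      rw [Fin.sum_univ_succ]
      simp

end sums

section conv
variable {ι : Type*} [DecidableEq (ι → ℕ)]

omit [DecidableEq (ι → ℕ)] in
lemma linSet_eq (b : ι → ℕ) (ps : List (ι → ℕ)) :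
    LinSet b ps = {x | ∃ c : Fin ps.length → ℕ, x = b + ∑ i, c i • ps.get i} := by
  ext x
  constructor <;> rintro ⟨c, rfl⟩ <;>
    exact ⟨c, by funext v; simp [Finset.sum_apply, Pi.smul_apply, smul_eq_mul]⟩

lemma linSet_eq_fLin (b : ι → ℕ) (ps : List (ι → ℕ)) :
    LinSet b ps = FLin b ps.toFinset := by
  rw [linSet_eq]
  ext x
  constructor
  · rintro ⟨c, rfl⟩
    obtain ⟨f, hf⟩ := listsum_to_finsetsum ps c
    exact ⟨f, by rw [hf]⟩
  · rintro ⟨f, rfl⟩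
    obtain ⟨c, hc⟩ := finsetsum_to_listsum ps f
    exact ⟨c, by rw [hc]⟩

lemma fLin_eq_linSet (b : ι → ℕ) (P : Finset (ι → ℕ)) :
    FLin b P = LinSet b P.toList := by
  rw [linSet_eq_fLin, Finset.toList_toFinset]

end conv

section prod
variable {V : Type*} {n : ℕ}

def res (π : V → Fin n) (i : Fin n) (x : V → ℕ) : {v : V // π v = i} → ℕ :=
  fun v => x v.1

def extFun (π : V → Fin n) (i : Fin n) (p : {v : V // π v = i} → ℕ) : V → ℕ :=
  fun v => if h : π v = i then p ⟨v, h⟩ else 0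

lemma res_extFun (π : V → Fin n) (i : Fin n) (p : {v : V // π v = i} → ℕ) :
    res π i (extFun π i p) = p := by
  funext w
  simp only [res, extFun, w.2, dif_pos]

lemma res_extFun_ne (π : V → Fin n) {i j : Fin n} (hij : j ≠ i) (p : {v : V // π v = j} → ℕ) :
    res π i (extFun π j p) = 0 := by
  funext w
  have h : ¬ π w.1 = j := by rw [w.2]; exact fun h => hij h.symm
  show (if h : π w.1 = j then p ⟨w.1, h⟩ else 0) = 0
  rw [dif_neg h]

lemma extFun_res (π : V → Fin n) (i : Fin n) (p : V → ℕ) (hp : ∀ v, p v ≠ 0 → π v = i) :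
    extFun π i (res π i p) = p := by
  funext v
  by_cases h : π v = i
  · show (if h : π v = i then res π i p ⟨v, h⟩ else 0) = p v
    rw [dif_pos h]; rfl
  · show (if h : π v = i then res π i p ⟨v, h⟩ else 0) = p v
    rw [dif_neg h]
    exact (by_contra fun h0 => h (hp v (Ne.symm h0)))

lemma res_sum (π : V → Fin n) (i : Fin n) {α : Type*} (s : Finset α) (F : α → V → ℕ) :
    res π i (∑ a ∈ s, F a) = ∑ a ∈ s, res π i (F a) := by
  funext w
  simp [res, Finset.sum_apply]

variable [DecidableEq (V → ℕ)]

lemma prod_eq_fLin (π : V → Fin n) (b : ∀ i, {v : V // π v = i} → ℕ)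
    (P : ∀ i, Finset ({v : V // π v = i} → ℕ)) :
    {x : V → ℕ | ∀ i, res π i x ∈ FLin (b i) (P i)}
      = FLin (fun v => b (π v) ⟨v, rfl⟩)
          (Finset.univ.biUnion fun i => (P i).image (extFun π i)) := by
  classical
  set B : V → ℕ := fun v => b (π v) ⟨v, rfl⟩ with hB
  set Q := Finset.univ.biUnion fun i => (P i).image (extFun π i) with hQ
  have hresB : ∀ i, res π i B = b i := by
    intro i
    funext w
    obtain ⟨v, hv⟩ := w
    simp only [res, hB]
    subst hv
    rfl
  have hres_add : ∀ i (x y : V → ℕ), res π i (x + y) = res π i x + res π i y :=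
    fun _ _ _ => rfl
  have hres_smul : ∀ i (c : ℕ) (x : V → ℕ), res π i (c • x) = c • res π i x :=
    fun _ _ _ => rfl
  ext x
  simp only [Set.mem_setOf_eq]
  constructor
  · -- product → FLin
    intro h
    choose f hf using h
    refine ⟨fun q => ∑ i, ∑ p ∈ (P i).filter (fun p => extFun π i p = q), f i p, ?_⟩
    have key : ∑ q ∈ Q, (∑ i, ∑ p ∈ (P i).filter (fun p => extFun π i p = q), f i p) • q
        = ∑ i, ∑ p ∈ P i, f i p • extFun π i p := by
      calc ∑ q ∈ Q, (∑ i, ∑ p ∈ (P i).filter (fun p => extFun π i p = q), f i p) • q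
          = ∑ q ∈ Q, ∑ i, ∑ p ∈ (P i).filter (fun p => extFun π i p = q), f i p • q := by
            refine Finset.sum_congr rfl fun q _ => ?_
            rw [Finset.sum_smul]
            exact Finset.sum_congr rfl fun i _ => Finset.sum_smul
        _ = ∑ i, ∑ q ∈ Q, ∑ p ∈ (P i).filter (fun p => extFun π i p = q), f i p • q :=
            Finset.sum_comm
        _ = ∑ i, ∑ p ∈ P i, f i p • extFun π i p := by
            refine Finset.sum_congr rfl fun i _ => ?_
            rw [← Finset.sum_fiberwise_of_maps_to (g := extFun π i) (t := Q)
              (fun p hp => Finset.mem_biUnion.2 ⟨i, Finset.mem_univ i,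
                Finset.mem_image_of_mem _ hp⟩) (fun p => f i p • extFun π i p)]
            refine Finset.sum_congr rfl fun q _ => Finset.sum_congr rfl fun p hp => ?_
            rw [(Finset.mem_filter.1 hp).2]
    rw [key]
    funext v
    have hx : x v = b (π v) ⟨v, rfl⟩ + ∑ p ∈ P (π v), f (π v) p * p ⟨v, rfl⟩ := by
      have := congrFun (hf (π v)) ⟨v, rfl⟩
      simpa [res, Finset.sum_apply] using this
    have hsum : (∑ i, ∑ p ∈ P i, f i p • extFun π i p) v
        = ∑ p ∈ P (π v), f (π v) p * p ⟨v, rfl⟩ := by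
      rw [Finset.sum_apply]
      rw [Finset.sum_eq_single (π v)]
      · rw [Finset.sum_apply]
        refine Finset.sum_congr rfl fun p _ => ?_
        simp [extFun]
      · intro i _ hne
        rw [Finset.sum_apply]
        refine Finset.sum_eq_zero fun p _ => ?_
        have : ¬ π v = i := fun h => hne h.symm
        simp [extFun, this]
      · simp
    simp only [Pi.add_apply, hsum, hx, hB]
  · -- FLin → product
    rintro ⟨f, rfl⟩ i
    refine ⟨fun p => ∑ q ∈ Q.filter (fun q => res π i q = p), f q, ?_⟩
    rw [hres_add, hresB, res_sum]
    congr 1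
    have hset : ∀ q ∈ Q, res π i q = 0 ∨ res π i q ∈ P i := by
      intro q hq
      obtain ⟨j, -, hj⟩ := Finset.mem_biUnion.1 hq
      obtain ⟨p, hp, rfl⟩ := Finset.mem_image.1 hj
      by_cases hij : j = i
      · subst hij; right; rw [res_extFun]; exact hp
      · left; exact res_extFun_ne π hij p
    calc ∑ q ∈ Q, res π i (f q • q)
        = ∑ q ∈ Q, f q • res π i q := by
          exact Finset.sum_congr rfl fun q _ => hres_smul i (f q) q
      _ = ∑ q ∈ Q.filter (fun q => res π i q ∈ P i), f q • res π i q := by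
          rw [Finset.sum_filter_of_ne]
          intro q hq hne
          rcases hset q hq with h0 | h1
          · exact absurd (by rw [h0, smul_zero]) hne
          · exact h1
      _ = ∑ p ∈ P i, ∑ q ∈ (Q.filter (fun q => res π i q ∈ P i)).filter
            (fun q => res π i q = p), f q • res π i q := by
          exact (Finset.sum_fiberwise_of_maps_to
            (fun q hq => (Finset.mem_filter.1 hq).2) _).symm
      _ = ∑ p ∈ P i, (∑ q ∈ Q.filter (fun q => res π i q = p), f q) • p := by
          refine Finset.sum_congr rfl fun p hp => ?_
          rw [Finset.filter_filter, Finset.sum_smul]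
          refine Finset.sum_congr (by
            ext q
            simp only [Finset.mem_filter, and_assoc]
            constructor
            · rintro ⟨h1, -, h3⟩; exact ⟨h1, h3⟩
            · rintro ⟨h1, h3⟩; exact ⟨h1, h3 ▸ hp, h3⟩) fun q hq => ?_
          rw [(Finset.mem_filter.1 hq).2]

lemma extFun_support (π : V → Fin n) (i : Fin n) (p : {v : V // π v = i} → ℕ) (v : V)
    (h : extFun π i p v ≠ 0) : π v = i := by
  by_contra hc
  exact h (dif_neg hc)

lemma fLin_decomp [DecidableEq (V → ℕ)] (π : V → Fin n) (b : V → ℕ) (P : Finset (V → ℕ))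
    (hP : ∀ p ∈ P, ∃ i, ∀ v, p v ≠ 0 → π v = i) :
    ∃ A : ∀ i, Finset ({v : V // π v = i} → ℕ),
      FLin b P = {x | ∀ i, res π i x ∈ FLin (res π i b) (A i)} := by
  classical
  refine ⟨fun i => (P.filter (fun p => ∀ v, p v ≠ 0 → π v = i)).image (res π i), ?_⟩
  rw [prod_eq_fLin π (fun i => res π i b)
    (fun i => (P.filter (fun p => ∀ v, p v ≠ 0 → π v = i)).image (res π i))]
  have hB : (fun v => res π (π v) b ⟨v, rfl⟩) = b := rfl
  have himg : ∀ i, ((P.filter (fun p => ∀ v, p v ≠ 0 → π v = i)).image (res π i)).image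
      (extFun π i) = P.filter (fun p => ∀ v, p v ≠ 0 → π v = i) := by
    intro i
    rw [Finset.image_image]
    calc (P.filter (fun p => ∀ v, p v ≠ 0 → π v = i)).image (extFun π i ∘ res π i)
        = (P.filter (fun p => ∀ v, p v ≠ 0 → π v = i)).image id :=
          Finset.image_congr fun p hp => extFun_res π i p (Finset.mem_filter.1 hp).2
      _ = _ := Finset.image_id
  have hQ : (Finset.univ.biUnion fun i =>
      ((P.filter (fun p => ∀ v, p v ≠ 0 → π v = i)).image (res π i)).image (extFun π i)) = P := by
    ext q
    rw [Finset.mem_biUnion]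
    constructor
    · rintro ⟨i, -, hq⟩
      rw [himg i] at hq
      exact (Finset.mem_filter.1 hq).1
    · intro hq
      obtain ⟨i, hi⟩ := hP q hq
      exact ⟨i, Finset.mem_univ i, by rw [himg i]; exact Finset.mem_filter.2 ⟨hq, hi⟩⟩
  rw [hB, hQ]

lemma compat_of_union {A : Type*} [Fintype A] (π : V → Fin n) (b : A → V → ℕ)
    (P : A → Finset (V → ℕ)) (hcomp : ∀ a, ∀ p ∈ P a, ∃ i, ∀ v, p v ≠ 0 → π v = i) :
    IsCompatibleSemilinear π (⋃ a, FLin (b a) (P a)) := by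
  classical
  let e := (Fintype.equivFin A).symm
  refine ⟨Fintype.card A, fun t => b (e t), fun t => (P (e t)).toList,
    fun t p hp => hcomp (e t) p (Finset.mem_toList.1 hp), ?_⟩
  calc ⋃ a, FLin (b a) (P a) = ⋃ t, FLin (b (e t)) (P (e t)) :=
        (e.surjective.iUnion_comp fun a => FLin (b a) (P a)).symm
    _ = ⋃ t, LinSet (b (e t)) ((P (e t)).toList) :=
        Set.iUnion_congr fun t => fLin_eq_linSet _ _

end prod

theorem compatible_semilinear_iff_union_of_products
    {V : Type*} [Fintype V] {n : ℕ} (π : V → Fin n) (S : Set (V → ℕ)) :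
    IsCompatibleSemilinear π S ↔
      ∃ (k : ℕ) (A : Fin k → ∀ i : Fin n, Set ({v : V // π v = i} → ℕ)),
        (∀ j i, IsSemilinear (A j i)) ∧
        S = ⋃ j, {x : V → ℕ | ∀ i : Fin n, (fun v : {v : V // π v = i} => x v.1) ∈ A j i} := by
  classical
  constructor
  · rintro ⟨k, b, ps, hcomp, rfl⟩
    have hdec : ∀ j : Fin k, ∃ A : ∀ i, Finset ({v : V // π v = i} → ℕ),
        LinSet (b j) (ps j) = {x | ∀ i, res π i x ∈ FLin (res π i (b j)) (A i)} := by
      intro j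
      obtain ⟨A, hA⟩ := fLin_decomp π (b j) (ps j).toFinset
        (fun p hp => hcomp j p (List.mem_toFinset.1 hp))
      exact ⟨A, by rw [linSet_eq_fLin, hA]⟩
    choose A hA using hdec
    refine ⟨k, fun j i => FLin (res π i (b j)) (A j i), fun j i => ?_, ?_⟩
    · refine ⟨1, fun _ => res π i (b j), fun _ => (A j i).toList, ?_⟩
      show FLin (res π i (b j)) (A j i) = ⋃ _ : Fin 1, LinSet (res π i (b j)) (A j i).toList
      rw [Set.iUnion_const, fLin_eq_linSet]
    · exact Set.iUnion_congr hA
  · rintro ⟨k, A, hA, rfl⟩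
    choose m bb pp hrep using hA
    have hswap : ∀ j : Fin k, {x : V → ℕ | ∀ i, (fun v : {v : V // π v = i} => x v.1) ∈ A j i}
        = ⋃ g : ∀ i, Fin (m j i), {x : V → ℕ | ∀ i,
            res π i x ∈ FLin (bb j i (g i)) ((pp j i (g i)).toFinset)} := by
      intro j
      ext x
      simp only [Set.mem_setOf_eq, Set.mem_iUnion, hrep, linSet_eq_fLin]
      exact Classical.skolem
    have hprod : ∀ j : Fin k, {x : V → ℕ | ∀ i, (fun v : {v : V // π v = i} => x v.1) ∈ A j i}
        = ⋃ g : ∀ i, Fin (m j i),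
            FLin (fun v => bb j (π v) (g (π v)) ⟨v, rfl⟩)
              (Finset.univ.biUnion fun i => ((pp j i (g i)).toFinset).image (extFun π i)) := by
      intro j
      rw [hswap j]
      exact Set.iUnion_congr fun g => prod_eq_fLin π _ _
    rw [Set.iUnion_congr hprod, Set.iUnion_sigma'
      (fun j (g : ∀ i, Fin (m j i)) => FLin (fun v => bb j (π v) (g (π v)) ⟨v, rfl⟩)
        (Finset.univ.biUnion fun i => ((pp j i (g i)).toFinset).image (extFun π i)))]
    exact compat_of_union π _ _ (fun a q hq => by
      obtain ⟨i, -, hi⟩ := Finset.mem_biUnion.1 hq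
      obtain ⟨p, -, rfl⟩ := Finset.mem_image.1 hi
      exact ⟨i, extFun_support π i p⟩)
end

section
/- CNF-SAT encoding correctness: let assignments α: {x₁,…,x_n} → {0,1} be encoded as words w_α = b a^{α(x₁)} b a^{α(x₂)} ⋯ b a^{α(x_n)} over {a,b}. Then for any i ∈ [1,n], α(x_i) = 1 if and only if b^i a b^{n−i} ⊑ w_α. -/
/-- The encoding `w_α = b a^{α(x₁)} b a^{α(x₂)} ⋯ b a^{α(x_n)}` of an assignment
`α : Fin n → ℕ` with values in `{0,1}`. -/
def encodeAssignment {A : Type*} (a b : A) (n : ℕ) (α : Fin n → ℕ) : List A :=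
  (List.ofFn fun i : Fin n => b :: List.replicate (α i) a).flatten

/-!
The pattern `b^(i+1) a b^(n-i-1)` is the encoding of the indicator of `i`, and encoding is
monotone for the pointwise order, which gives one direction. Conversely, the pattern contains as
many `b`s as `w_α` does, so any embedding sends its `a` to an `a` of `w_α` preceded by exactly
`i + 1` copies of `b`, that is, to an `a` in the block of `x_i`; hence `α(x_i) ≠ 0`.
-/

section
variable {A : Type*} (a b : A)

theorem encodeAssignment_succ (n : ℕ) (α : Fin (n + 1) → ℕ) :
    encodeAssignment a b (n + 1) α =
      b :: (List.replicate (α 0) a ++ encodeAssignment a b n fun j => α j.succ) := by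
  rw [encodeAssignment, List.ofFn_succ, List.flatten_cons]
  rfl

theorem encodeAssignment_zero_right (n : ℕ) :
    encodeAssignment a b n (fun _ => 0) = List.replicate n b := by
  induction n with
  | zero => rfl
  | succ n ih => rw [encodeAssignment_succ]; exact congrArg (b :: ·) ih

theorem encodeAssignment_single {n : ℕ} (i : Fin n) :
    encodeAssignment a b n (Pi.single i 1) =
      List.replicate (i.val + 1) b ++ [a] ++ List.replicate (n - (i.val + 1)) b := by
  induction n with
  | zero => exact i.elim0
  | succ n ih =>
    rw [encodeAssignment_succ]
    induction i using Fin.cases with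
    | zero => simp [encodeAssignment_zero_right]
    | succ j =>
      have htail : (fun k : Fin n => (Pi.single j.succ 1 : Fin (n + 1) → ℕ) k.succ) =
          Pi.single j 1 := by
        funext k
        simp only [Pi.single_apply, Fin.succ_inj]
      simp [htail, ih, List.replicate_succ]

theorem encodeAssignment_sublist_of_le {n : ℕ} {α β : Fin n → ℕ} (h : β ≤ α) :
    (encodeAssignment a b n β).Sublist (encodeAssignment a b n α) := by
  induction n with
  | zero => rfl
  | succ n ih =>
    rw [encodeAssignment_succ, encodeAssignment_succ]
    exact List.cons_sublist_cons.2
      (((List.replicate_sublist_replicate a).2 (h 0)).append (ih fun j => h j.succ))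

variable [BEq A] [LawfulBEq A]

theorem count_encodeAssignment (hab : a ≠ b) (n : ℕ) (α : Fin n → ℕ) :
    (encodeAssignment a b n α).count b = n := by
  induction n with
  | zero => rfl
  | succ n ih => simp [encodeAssignment_succ, List.count_replicate, hab, ih]

theorem exists_count_eq_of_replicate_append_cons_sublist {k m : ℕ} {w : List A}
    (h : (List.replicate k b ++ a :: List.replicate m b).Sublist w) (hw : w.count b ≤ k + m) :
    ∃ X Y, w = X ++ a :: Y ∧ X.count b = k := by
  obtain ⟨X, R, rfl, hX, hR⟩ := List.append_sublist_iff.1 h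
  obtain ⟨S, Y, rfl, haS, hY⟩ := List.cons_sublist_iff.1 hR
  obtain ⟨s, t, rfl⟩ := List.mem_iff_append.1 haS
  refine ⟨X ++ s, t ++ Y, by simp, ?_⟩
  have hkX := hX.count_le b
  have hmY := hY.count_le b
  simp only [List.count_replicate_self, List.count_append, List.count_cons] at hkX hmY hw ⊢
  omega

theorem exists_pos_of_encodeAssignment_eq_append_cons (hab : a ≠ b) {n : ℕ} {α : Fin n → ℕ}
    {X Y : List A} (h : encodeAssignment a b n α = X ++ a :: Y) :
    ∃ j, 0 < α j ∧ X.count b = j.val + 1 := by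
  induction n generalizing X with
  | zero => simp [encodeAssignment] at h
  | succ n ih =>
    rw [encodeAssignment_succ] at h
    rcases X with _ | ⟨c, X⟩
    · exact absurd (List.cons.inj h).1.symm hab
    obtain ⟨rfl, hrest⟩ := List.cons.inj (h.trans (List.cons_append ..))
    rcases List.append_eq_append_iff.1 hrest with ⟨s, rfl, hs⟩ | ⟨_ | ⟨c, s⟩, hrep, hs⟩
    · obtain ⟨j, hj, hcount⟩ := ih hs
      exact ⟨j.succ, hj, by simp [List.count_replicate, hab, hcount]⟩
    · -- the tail encoding would start with `a`; the induction hypothesis at `X = []` rules it out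
      obtain ⟨j, -, hcount⟩ := ih (X := []) (by simpa using hs.symm)
      simp at hcount
    · obtain ⟨hlen, hX, -⟩ := List.append_eq_replicate_iff.1 hrep.symm
      refine ⟨0, ?_, ?_⟩
      · simp only [List.length_cons] at hlen
        omega
      · rw [hX]
        simp [List.count_replicate, hab]

theorem replicate_append_sublist_encodeAssignment_iff (hab : a ≠ b) {n : ℕ} (α : Fin n → ℕ)
    (i : Fin n) :
    (List.replicate (i.val + 1) b ++ [a] ++ List.replicate (n - (i.val + 1)) b).Sublist
        (encodeAssignment a b n α) ↔ 0 < α i := by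
  constructor
  · intro h
    obtain ⟨X, Y, hw, hX⟩ := exists_count_eq_of_replicate_append_cons_sublist a b
      (by simpa using h) (by rw [count_encodeAssignment a b hab]; omega)
    obtain ⟨j, hj, hXj⟩ := exists_pos_of_encodeAssignment_eq_append_cons a b hab hw
    rwa [Fin.ext (by omega : i.val = j.val)]
  · intro h
    rw [← encodeAssignment_single]
    refine encodeAssignment_sublist_of_le a b fun j => ?_
    rcases eq_or_ne j i with rfl | hji
    · simp only [Pi.single_eq_same]
      exact h
    · simp [hji]

end

theorem cnf_sat_encoding_correct {A : Type*} (a b : A) (hab : a ≠ b)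
    (n : ℕ) (α : Fin n → ℕ) (hα : ∀ i, α i ≤ 1) (i : Fin n) :
    α i = 1 ↔
      (List.replicate (i.val + 1) b ++ [a] ++ List.replicate (n - (i.val + 1)) b).Sublist
        (encodeAssignment a b n α) := by
  classical
  rw [replicate_append_sublist_encodeAssignment_iff a b hab]
  have := hα i
  omega
end
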